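/- Let f ∈ L¹(ℝ³) and let u_f(t,x) := (t/4π) ∫_{S²} f(x + tω) dσ(ω) be the free sine wave propagator applied to f. Then for every t > 0 and every x ∈ ℝ³, the tail integral satisfies ∫_t^∞ |u_f(s,x)| ds ≤ ‖f‖_{L¹(ℝ³)}/(4π t). -/

import Mathlib

set_option autoImplicit false

open MeasureTheory ENNReal Real

noncomputable section

/-- `ℝ³` as a Euclidean space. -/
abbrev R3 : Type := EuclideanSpace ℝ (Fin 3)

/-- The surface measure on the unit sphere `S² ⊂ ℝ³`. -/
def sphereMeasure : Measure (Metric.sphere (0 : R3) 1) :=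
  (volume : Measure R3).toSphere

/-- The free sine wave propagator (Kirchhoff formula):
`u_f(t,x) = (t/4π) ∫_{S²} f(x + tω) dσ(ω)`. -/
def sinProp (f : R3 → ℂ) (t : ℝ) (x : R3) : ℂ :=
  (t / (4 * π)) • ∫ ω : Metric.sphere (0 : R3) 1, f (x + t • (ω : R3)) ∂sphereMeasure

/-!
For `s ≥ t`, `|u_f(s,x)| ≤ (s/4π) ∫_{S²} |f(x+sω)| dσ ≤ (1/4πt) · s² ∫_{S²} |f(x+sω)| dσ`, and
integrating `s² ∫_{S²} |f(x+sω)| dσ(ω)` over `s > 0` gives `‖f‖_{L¹}` in polar coordinates.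
Since `f` is only almost everywhere measurable, `(s, ω) ↦ |f(x+sω)|` need not be measurable;
polar coordinates are applied to a measurable majorant of `|f|` with the same integral instead.
-/

open Set Metric

theorem AEMeasurable.exists_measurable_ge_lintegral_eq {α : Type*} [MeasurableSpace α]
    {μ : Measure α} {f : α → ℝ≥0∞} (hf : AEMeasurable f μ) :
    ∃ g : α → ℝ≥0∞, Measurable g ∧ f ≤ g ∧ ∫⁻ a, g a ∂μ = ∫⁻ a, f a ∂μ := by
  set N := toMeasurable μ {a | f a ≠ hf.mk f a}
  have hN : μ N = 0 := by rw [measure_toMeasurable]; exact hf.ae_eq_mk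
  refine ⟨hf.mk f + N.indicator fun _ => ∞,
    hf.measurable_mk.add (measurable_const.indicator (measurableSet_toMeasurable _ _)),
    fun a => ?_, ?_⟩
  · by_cases ha : a ∈ N
    · simp [ha]
    · have : f a = hf.mk f a := not_not.1 fun h => ha (subset_toMeasurable _ _ h)
      simp [ha, this]
  · refine lintegral_congr_ae ?_
    filter_upwards [measure_eq_zero_iff_ae_notMem.1 hN, hf.ae_eq_mk] with a ha hfa
    simp [ha, hfa]

section Polar

variable {E : Type*} [NormedAddCommGroup E] [NormedSpace ℝ E] [FiniteDimensional ℝ E]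
  [MeasurableSpace E] [BorelSpace E] [Nontrivial E] (μ : Measure E) [μ.IsAddHaarMeasure]

theorem lintegral_eq_lintegral_toSphere_prod_volumeIoiPow (G : E → ℝ≥0∞) :
    ∫⁻ y, G y ∂μ = ∫⁻ p : sphere (0 : E) 1 × Ioi (0 : ℝ), G ((p.2 : ℝ) • (p.1 : E))
      ∂(μ.toSphere.prod (Measure.volumeIoiPow (Module.finrank ℝ E - 1))) := by
  calc ∫⁻ y, G y ∂μ = ∫⁻ y in ({0}ᶜ : Set E), G y ∂μ := by rw [restrict_compl_singleton]
    _ = ∫⁻ y : ({0}ᶜ : Set E), G y ∂(μ.comap Subtype.val) :=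
        (lintegral_subtype_comap (measurableSet_singleton 0).compl _).symm
    _ = _ := by
        rw [← (μ.measurePreserving_homeomorphUnitSphereProd).lintegral_comp_emb
          (Homeomorph.measurableEmbedding _)]
        refine lintegral_congr fun y => ?_
        simp [smul_inv_smul₀ (norm_ne_zero_iff.2 y.2)]

theorem lintegral_eq_lintegral_Ioi_pow_mul_lintegral_toSphere {G : E → ℝ≥0∞}
    (hG : Measurable G) :
    ∫⁻ y, G y ∂μ = ∫⁻ r in Ioi (0 : ℝ),
      ENNReal.ofReal (r ^ (Module.finrank ℝ E - 1)) * ∫⁻ ω, G (r • (ω : E)) ∂μ.toSphere := by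
  have hpolar : Measurable fun p : sphere (0 : E) 1 × Ioi (0 : ℝ) => G ((p.2 : ℝ) • (p.1 : E)) :=
    hG.comp (by fun_prop)
  rw [lintegral_eq_lintegral_toSphere_prod_volumeIoiPow, lintegral_prod_symm _ hpolar.aemeasurable,
    Measure.volumeIoiPow, lintegral_withDensity_eq_lintegral_mul _ (by fun_prop)
      hpolar.lintegral_prod_left,
    ← lintegral_subtype_comap measurableSet_Ioi]
  rfl

theorem AEMeasurable.lintegral_Ioi_pow_mul_lintegral_toSphere_le {G : E → ℝ≥0∞}
    (hG : AEMeasurable G μ) :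
    ∫⁻ r in Ioi (0 : ℝ), ENNReal.ofReal (r ^ (Module.finrank ℝ E - 1)) *
      ∫⁻ ω, G (r • (ω : E)) ∂μ.toSphere ≤ ∫⁻ y, G y ∂μ := by
  obtain ⟨g, hg, hGg, hgG⟩ := hG.exists_measurable_ge_lintegral_eq
  rw [← hgG, lintegral_eq_lintegral_Ioi_pow_mul_lintegral_toSphere μ hg]
  gcongr with r ω
  exact hGg _

end Polar

theorem enorm_sinProp_le (f : R3 → ℂ) {t s : ℝ} (ht : 0 < t) (hts : t ≤ s) (x : R3) :
    ‖sinProp f s x‖ₑ ≤ ENNReal.ofReal (1 / (4 * π * t)) *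
      (ENNReal.ofReal (s ^ 2) * ∫⁻ ω, ‖f (x + s • (ω : R3))‖ₑ ∂sphereMeasure) := by
  have hs : 0 < s := ht.trans_le hts
  have hcoeff : ENNReal.ofReal (s / (4 * π)) ≤
      ENNReal.ofReal (1 / (4 * π * t)) * ENNReal.ofReal (s ^ 2) := by
    rw [← ENNReal.ofReal_mul (by positivity)]
    refine ENNReal.ofReal_le_ofReal ?_
    rw [show 1 / (4 * π * t) * s ^ 2 = s / (4 * π) * (s / t) by field_simp]
    exact le_mul_of_one_le_right (by positivity) ((one_le_div ht).2 hts)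
  calc ‖sinProp f s x‖ₑ
      = ENNReal.ofReal (s / (4 * π)) * ‖∫ ω, f (x + s • (ω : R3)) ∂sphereMeasure‖ₑ := by
        rw [sinProp, enorm_smul, Real.enorm_eq_ofReal (by positivity)]
    _ ≤ ENNReal.ofReal (s / (4 * π)) * ∫⁻ ω, ‖f (x + s • (ω : R3))‖ₑ ∂sphereMeasure := by
        gcongr
        exact enorm_integral_le_lintegral_enorm _
    _ ≤ _ := by
        rw [← mul_assoc]
        gcongr

theorem sine_tail_integral_bound (f : R3 → ℂ) (hf : Integrable f volume) :
    ∀ t : ℝ, 0 < t → ∀ x : R3,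
      ∫⁻ s in Set.Ioi t, (‖sinProp f s x‖₊ : ℝ≥0∞) ≤
        ENNReal.ofReal ((∫ y : R3, ‖f y‖) / (4 * π * t)) := by
  intro t ht x
  set c := ENNReal.ofReal (1 / (4 * π * t))
  have hpolar := (hf.aestronglyMeasurable.enorm.comp_quasiMeasurePreserving
    (quasiMeasurePreserving_add_left volume x)).lintegral_Ioi_pow_mul_lintegral_toSphere_le volume
  simp only [finrank_euclideanSpace_fin, Nat.add_one_sub_one, Function.comp_apply] at hpolar
  calc ∫⁻ s in Ioi t, ‖sinProp f s x‖ₑ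
      ≤ ∫⁻ s in Ioi t, c * (ENNReal.ofReal (s ^ 2) *
          ∫⁻ ω, ‖f (x + s • (ω : R3))‖ₑ ∂sphereMeasure) :=
        setLIntegral_mono' measurableSet_Ioi fun s hs => enorm_sinProp_le f ht (le_of_lt hs) x
    _ = c * ∫⁻ s in Ioi t, ENNReal.ofReal (s ^ 2) *
          ∫⁻ ω, ‖f (x + s • (ω : R3))‖ₑ ∂sphereMeasure :=
        lintegral_const_mul' _ _ ENNReal.ofReal_ne_top
    _ ≤ c * ∫⁻ y, ‖f (x + y)‖ₑ := by
        gcongr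
        exact (lintegral_mono_set (Ioi_subset_Ioi ht.le)).trans hpolar
    _ = ENNReal.ofReal ((∫ y : R3, ‖f y‖) / (4 * π * t)) := by
        rw [lintegral_add_left_eq_self (fun y => ‖f y‖ₑ) x,
          ← ofReal_integral_norm_eq_lintegral_enorm hf, ← ENNReal.ofReal_mul (by positivity),
          one_div_mul_eq_div]
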